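/- Let V, V' ⊆ M be finite nonempty sets, let k ≥ 1 be an integer, and let s ≥ 0 be an integer with |V ⊕ V'| ≤ s, where ⊕ denotes symmetric difference. Then there exists a nonempty set S ⊆ V ∪ V' with |S| ≤ k + s and cl(S,V) ≤ OPT_k(V'). -/

import Mathlib

/-- The k-center objective: `cl S V = max_{x ∈ V} min_{y ∈ S} d(x,y)`
(for finite nonempty `S`, `V`; the centers `S` need not lie in `V`). -/
noncomputable def cl {M : Type*} [MetricSpace M] (S V : Finset M) : ℝ :=
  sSup ((fun x => Metric.infDist x (S : Set M)) '' (V : Set M))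

/-- The optimal k-center cost:
`OPT k V = min { cl(S,V) : S ⊆ V, S nonempty, |S| ≤ k }`. -/
noncomputable def OPT {M : Type*} [MetricSpace M] (k : ℕ) (V : Finset M) : ℝ :=
  sInf {r : ℝ | ∃ S : Finset M, S ⊆ V ∧ S.Nonempty ∧ S.card ≤ k ∧ r = cl S V}

/-! The centres of an optimal solution for `V'`, together with the points of `V \ V'` as extra
centres, serve every point of `V`: a point of `V ∩ V'` is no farther from them than from the old
centres, and a point of `V \ V'` is a centre itself. -/

section KCenter

variable {M : Type*} [MetricSpace M]

theorem infDist_le_cl {S V : Finset M} {x : M} (hx : x ∈ V) :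
    Metric.infDist x (S : Set M) ≤ cl S V :=
  le_csSup ((V.finite_toSet.image _).bddAbove) ⟨x, hx, rfl⟩

theorem cl_nonneg (S V : Finset M) : 0 ≤ cl S V :=
  Real.sSup_nonneg (by rintro _ ⟨x, -, rfl⟩; exact Metric.infDist_nonneg)

theorem cl_le {S V : Finset M} {r : ℝ} (hr : 0 ≤ r)
    (h : ∀ x ∈ V, Metric.infDist x (S : Set M) ≤ r) : cl S V ≤ r :=
  Real.sSup_le (by rintro _ ⟨x, hx, rfl⟩; exact h x hx) hr

theorem exists_cl_eq_OPT {V : Finset M} (hV : V.Nonempty) {k : ℕ} (hk : 1 ≤ k) :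
    ∃ S ⊆ V, S.Nonempty ∧ S.card ≤ k ∧ cl S V = OPT k V := by
  set R := {r : ℝ | ∃ S : Finset M, S ⊆ V ∧ S.Nonempty ∧ S.card ≤ k ∧ r = cl S V}
  have hR_nonempty : R.Nonempty := by
    obtain ⟨y, hy⟩ := hV
    exact ⟨_, {y}, Finset.singleton_subset_iff.mpr hy, Finset.singleton_nonempty y,
      by simpa using hk, rfl⟩
  have hR_finite : R.Finite := by
    refine (V.powerset.finite_toSet.image (cl · V)).subset ?_
    rintro _ ⟨S, hS, -, -, rfl⟩
    exact ⟨S, Finset.mem_coe.mpr (Finset.mem_powerset.mpr hS), rfl⟩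
  obtain ⟨S, hSV, hS, hSk, hOPT⟩ := hR_nonempty.csInf_mem hR_finite
  exact ⟨S, hSV, hS, hSk, hOPT.symm⟩

theorem cl_union_sdiff_le [DecidableEq M] {S : Finset M} (hS : S.Nonempty) (V V' : Finset M) :
    cl (S ∪ (V \ V')) V ≤ cl S V' := by
  refine cl_le (cl_nonneg S V') fun x hx => ?_
  by_cases hxV' : x ∈ V'
  · calc Metric.infDist x ((S ∪ (V \ V') : Finset M) : Set M)
          ≤ Metric.infDist x (S : Set M) :=
            Metric.infDist_le_infDist_of_subset (by simp) (by simpa using hS)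
      _ ≤ cl S V' := infDist_le_cl hxV'
  · have hx_center : x ∈ ((S ∪ (V \ V') : Finset M) : Set M) := by simp [hx, hxV']
    rw [Metric.infDist_zero_of_mem hx_center]
    exact cl_nonneg S V'

end KCenter

theorem stmt_12_general {M : Type*} [MetricSpace M] [DecidableEq M] (V V' : Finset M)
    (hV' : V'.Nonempty) (k : ℕ) (hk : 1 ≤ k) (s : ℕ)
    (h : (symmDiff V V').card ≤ s) :
    ∃ S : Finset M, S ⊆ V ∪ V' ∧ S.Nonempty ∧ S.card ≤ k + s ∧ cl S V ≤ OPT k V' := by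
  obtain ⟨S, hSV', hS, hSk, hOPT⟩ := exists_cl_eq_OPT hV' hk
  have hsdiff : (V \ V').card ≤ s :=
    (Finset.card_le_card (le_sup_left : V \ V' ≤ V \ V' ⊔ V' \ V)).trans h
  refine ⟨S ∪ (V \ V'), ?_, hS.mono Finset.subset_union_left, ?_, ?_⟩
  · exact Finset.union_subset (hSV'.trans Finset.subset_union_right)
      (Finset.sdiff_subset.trans Finset.subset_union_left)
  · exact (Finset.card_union_le _ _).trans (add_le_add hSk hsdiff)
  · exact hOPT ▸ cl_union_sdiff_le hS V V'

/-- Lazy-Updates Lemma: If `|V ⊕ V'| ≤ s`, then there is a nonempty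
`S ⊆ V ∪ V'` with `|S| ≤ k + s` and `cl(S,V) ≤ OPT_k(V')`. -/
theorem stmt_12 {M : Type*} [MetricSpace M] [DecidableEq M] (V V' : Finset M)
    (hV : V.Nonempty) (hV' : V'.Nonempty) (k : ℕ) (hk : 1 ≤ k) (s : ℕ)
    (h : (symmDiff V V').card ≤ s) :
    ∃ S : Finset M, S ⊆ V ∪ V' ∧ S.Nonempty ∧ S.card ≤ k + s ∧ cl S V ≤ OPT k V' :=
  stmt_12_general V V' hV' k hk s h
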